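/- For all real η and r ≥ 0, (1/(4√π)) ∫_{-∞}^{η} e^{-t²} erfc(r t)² dt = 1/8 + (1/8)·erf(η) + T(√2·η, r) + (1/8)·Y(∞, r) + (1/8)·Y(η, r), where Y(η,r) = (2/√π)∫_0^η e^{-u²} erf(ru)² du, Y(∞,r) = lim_{η→∞} Y(η,r), T is Owen's T function, and erfc = 1 - erf. -/

import Mathlib

/-!
Both sides, as functions of `η`, tend to `0` as `η → -∞` and have the same derivative, so they
agree. Differentiating Owen's integral under the integral sign and substituting `s = η u` gives
`d/dη T(√2 η, r) = -e^{-η²} erf(r η) / (2√π)`; together with `erf' = 2 e^{-η²}/√π` and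
`∂_η Y = 2 e^{-η²} erf(r η)² / √π`, the right-hand side has derivative
`e^{-η²} (1 - erf(r η))² / (4√π)`. At `-∞`, `erf → -1`, `T(√2 η, r) = O(e^{-η²})`, and `Y(·, r)` is
odd, so `Y(η, r) → -Y(∞, r)`.
-/

open MeasureTheory intervalIntegral Filter

/-- The error function. -/
noncomputable def erf (z : ℝ) : ℝ :=
  (2 / Real.sqrt Real.pi) * ∫ t in (0 : ℝ)..z, Real.exp (-t ^ 2)

/-- The complementary error function. -/
noncomputable def erfc (z : ℝ) : ℝ := 1 - erf z

/-- Owen's T function. -/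
noncomputable def owenT (h r : ℝ) : ℝ :=
  (1 / (2 * Real.pi)) * ∫ u in (0 : ℝ)..r,
    Real.exp (-h ^ 2 * (1 + u ^ 2) / 2) / (1 + u ^ 2)

/-- The function 𝓨(η, r). -/
noncomputable def Yfun (η r : ℝ) : ℝ :=
  (2 / Real.sqrt Real.pi) * ∫ u in (0 : ℝ)..η, Real.exp (-u ^ 2) * erf (r * u) ^ 2

open Set Real Topology Interval

theorem Filter.Tendsto.atBot_of_odd {α E : Type*} [AddCommGroup α] [PartialOrder α]
    [IsOrderedAddMonoid α] [AddGroup E] [TopologicalSpace E] [ContinuousNeg E] {f : α → E} {L : E}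
    (hf : ∀ x, f (-x) = -f x) (h : Tendsto f atTop (𝓝 L)) : Tendsto f atBot (𝓝 (-L)) :=
  (h.comp tendsto_neg_atBot_atTop).neg.congr fun x => by simp [hf]

theorem integrable_exp_neg_sq : Integrable fun t : ℝ => exp (-t ^ 2) := by
  simpa using integrable_exp_neg_mul_sq one_pos

theorem integral_exp_neg_sq_eq_erf (z : ℝ) :
    ∫ t in (0 : ℝ)..z, exp (-t ^ 2) = √π / 2 * erf z := by
  have : √π ≠ 0 := by positivity
  rw [erf]
  field_simp

theorem hasDerivAt_erf (z : ℝ) : HasDerivAt erf (2 / √π * exp (-z ^ 2)) z := by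
  have hc : Continuous fun t : ℝ => exp (-t ^ 2) := by fun_prop
  exact ((hc.integral_hasStrictDerivAt 0 z).hasDerivAt).const_mul _

theorem differentiable_erf : Differentiable ℝ erf := fun z => (hasDerivAt_erf z).differentiableAt

theorem erf_neg (z : ℝ) : erf (-z) = -erf z := by
  have h := integral_comp_neg (a := z) (b := 0) fun t => exp (-t ^ 2)
  simp only [neg_zero, neg_sq] at h
  rw [erf, erf, ← h, integral_symm]
  ring

theorem monotone_erf : Monotone erf :=
  monotone_of_deriv_nonneg differentiable_erf fun z => by
    rw [(hasDerivAt_erf z).deriv]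
    positivity

theorem tendsto_erf_atTop : Tendsto erf atTop (𝓝 1) := by
  have h : Tendsto (fun z => ∫ t in (0 : ℝ)..z, exp (-t ^ 2)) atTop (𝓝 (√π / 2)) := by
    have hI : ∫ t in Ioi (0 : ℝ), exp (-t ^ 2) = √π / 2 := by
      simpa using integral_gaussian_Ioi 1
    exact hI ▸ intervalIntegral_tendsto_integral_Ioi 0 integrable_exp_neg_sq.integrableOn tendsto_id
  have : √π ≠ 0 := by positivity
  have h' := h.const_mul (2 / √π)
  rwa [show 2 / √π * (√π / 2) = 1 by field_simp] at h'

theorem tendsto_erf_atBot : Tendsto erf atBot (𝓝 (-1)) :=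
  tendsto_erf_atTop.atBot_of_odd erf_neg

theorem abs_erf_le_one (z : ℝ) : |erf z| ≤ 1 :=
  abs_le.mpr ⟨monotone_erf.le_of_tendsto tendsto_erf_atBot z,
    monotone_erf.ge_of_tendsto tendsto_erf_atTop z⟩

theorem hasDerivAt_Yfun (η r : ℝ) :
    HasDerivAt (fun x => Yfun x r) (2 / √π * (exp (-η ^ 2) * erf (r * η) ^ 2)) η := by
  have hc : Continuous fun u => exp (-u ^ 2) * erf (r * u) ^ 2 := by
    have := differentiable_erf.continuous
    fun_prop
  exact ((hc.integral_hasStrictDerivAt 0 η).hasDerivAt).const_mul _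

theorem Yfun_neg (η r : ℝ) : Yfun (-η) r = -Yfun η r := by
  have h := integral_comp_neg (a := η) (b := 0) fun u => exp (-u ^ 2) * erf (r * u) ^ 2
  simp only [neg_zero, neg_sq, mul_neg, erf_neg] at h
  rw [Yfun, Yfun, ← h, integral_symm]
  ring

theorem integrable_exp_neg_sq_mul_erfc_sq (r : ℝ) :
    Integrable fun t => exp (-t ^ 2) * erfc (r * t) ^ 2 := by
  have hc : Continuous fun t => exp (-t ^ 2) * erfc (r * t) ^ 2 := by
    have := differentiable_erf.continuous
    unfold erfc
    fun_prop
  refine (integrable_exp_neg_sq.mul_const 4).mono' hc.aestronglyMeasurable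
    (Eventually.of_forall fun t => ?_)
  have herfc : erfc (r * t) ^ 2 ≤ 4 := by
    have := abs_le.mp (abs_erf_le_one (r * t))
    unfold erfc
    nlinarith
  rw [norm_mul, norm_of_nonneg (exp_pos _).le, norm_of_nonneg (sq_nonneg _)]
  gcongr

theorem owenT_sqrt_two_mul (x r : ℝ) :
    owenT (√2 * x) r =
      1 / (2 * π) * ∫ u in (0 : ℝ)..r, exp (-x ^ 2 * (1 + u ^ 2)) / (1 + u ^ 2) := by
  have h2 : (√2 * x) ^ 2 = 2 * x ^ 2 := by rw [mul_pow, sq_sqrt zero_le_two]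
  rw [owenT, h2]
  congr 1
  refine integral_congr fun u _ => ?_
  ring_nf

theorem hasDerivAt_integral_exp_neg_sq_mul_one_add_sq_div (x r : ℝ) :
    HasDerivAt (fun y => ∫ u in (0 : ℝ)..r, exp (-y ^ 2 * (1 + u ^ 2)) / (1 + u ^ 2))
      (∫ u in (0 : ℝ)..r, -2 * x * exp (-x ^ 2 * (1 + u ^ 2))) x := by
  have hderiv : ∀ y u : ℝ, HasDerivAt (fun y => exp (-y ^ 2 * (1 + u ^ 2)) / (1 + u ^ 2))
      (-2 * y * exp (-y ^ 2 * (1 + u ^ 2))) y := by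
    intro y u
    refine ((((hasDerivAt_pow 2 y).neg.mul_const (1 + u ^ 2)).exp).div_const
      (1 + u ^ 2)).congr_deriv ?_
    simp only [Pi.neg_apply]
    field_simp
    ring
  have hbound : ∀ u, ∀ y ∈ Metric.ball x 1,
      ‖-2 * y * exp (-y ^ 2 * (1 + u ^ 2))‖ ≤ 2 * (|x| + 1) := by
    intro u y hy
    have hy' : |y| ≤ |x| + 1 := by
      have := abs_sub_abs_le_abs_sub y x
      rw [Metric.mem_ball, dist_eq] at hy
      linarith
    have hexp : exp (-y ^ 2 * (1 + u ^ 2)) ≤ 1 := exp_le_one_iff.mpr (by nlinarith [sq_nonneg y])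
    rw [norm_mul, norm_mul, norm_of_nonneg (exp_pos _).le, norm_neg, Real.norm_two, norm_eq_abs]
    calc 2 * |y| * exp (-y ^ 2 * (1 + u ^ 2)) ≤ 2 * (|x| + 1) * 1 := by gcongr
      _ = 2 * (|x| + 1) := mul_one _
  have hcont (y : ℝ) : Continuous fun u : ℝ => exp (-y ^ 2 * (1 + u ^ 2)) / (1 + u ^ 2) :=
    (by fun_prop : Continuous _).div (by fun_prop) fun u => by positivity
  refine (hasDerivAt_integral_of_dominated_loc_of_deriv_le (bound := fun _ => 2 * (|x| + 1))
    (Metric.ball_mem_nhds x one_pos)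
    (Eventually.of_forall fun y => (hcont y).aestronglyMeasurable)
    ((hcont x).intervalIntegrable _ _) (by fun_prop)
    (Eventually.of_forall fun u _ => hbound u) intervalIntegrable_const
    (Eventually.of_forall fun u _ y _ => hderiv y u)).2

theorem integral_neg_two_mul_exp_neg_sq_mul_one_add_sq (x r : ℝ) :
    ∫ u in (0 : ℝ)..r, -2 * x * exp (-x ^ 2 * (1 + u ^ 2)) = -√π * exp (-x ^ 2) * erf (r * x) := by
  have hsub : x * ∫ u in (0 : ℝ)..r, exp (-(x * u) ^ 2) = ∫ s in (0 : ℝ)..x * r, exp (-s ^ 2) := by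
    simpa using smul_integral_comp_mul_left (a := 0) (b := r) (fun s => exp (-s ^ 2)) x
  calc ∫ u in (0 : ℝ)..r, -2 * x * exp (-x ^ 2 * (1 + u ^ 2))
      = -2 * exp (-x ^ 2) * (x * ∫ u in (0 : ℝ)..r, exp (-(x * u) ^ 2)) := by
        rw [← intervalIntegral.integral_const_mul, ← intervalIntegral.integral_const_mul]
        refine integral_congr fun u _ => ?_
        rw [show -x ^ 2 * (1 + u ^ 2) = -x ^ 2 + -(x * u) ^ 2 by ring, exp_add]
        ring
    _ = -√π * exp (-x ^ 2) * erf (r * x) := by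
        rw [hsub, mul_comm x r, integral_exp_neg_sq_eq_erf]
        ring

theorem hasDerivAt_owenT_sqrt_two_mul (x r : ℝ) :
    HasDerivAt (fun y => owenT (√2 * y) r) (-(1 / (2 * √π)) * exp (-x ^ 2) * erf (r * x)) x := by
  have h := (hasDerivAt_integral_exp_neg_sq_mul_one_add_sq_div x r).const_mul (1 / (2 * π))
  rw [integral_neg_two_mul_exp_neg_sq_mul_one_add_sq] at h
  refine (h.congr_deriv ?_).congr_of_eventuallyEq
    (Eventually.of_forall fun y => owenT_sqrt_two_mul y r)
  have : √π ≠ 0 := by positivity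
  field_simp
  rw [sq_sqrt pi_pos.le]

theorem abs_owenT_sqrt_two_mul_le (x r : ℝ) :
    |owenT (√2 * x) r| ≤ 1 / (2 * π) * (exp (-x ^ 2) * |r|) := by
  have hbound : ∀ u ∈ Ι (0 : ℝ) r, ‖exp (-x ^ 2 * (1 + u ^ 2)) / (1 + u ^ 2)‖ ≤ exp (-x ^ 2) := by
    intro u _
    rw [norm_of_nonneg (by positivity)]
    calc exp (-x ^ 2 * (1 + u ^ 2)) / (1 + u ^ 2) ≤ exp (-x ^ 2 * (1 + u ^ 2)) :=
          div_le_self (exp_pos _).le (by nlinarith [sq_nonneg u])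
      _ ≤ exp (-x ^ 2) := exp_le_exp.mpr (by nlinarith [sq_nonneg u, sq_nonneg x])
  have hint := norm_integral_le_of_norm_le_const hbound
  rw [sub_zero, norm_eq_abs] at hint
  rw [owenT_sqrt_two_mul, abs_mul, abs_of_pos (by positivity : (0 : ℝ) < 1 / (2 * π))]
  gcongr

theorem tendsto_owenT_sqrt_two_mul_atBot (r : ℝ) :
    Tendsto (fun x => owenT (√2 * x) r) atBot (𝓝 0) := by
  have hsq : Tendsto (fun x : ℝ => x ^ 2) atBot atTop := by
    simpa [sq] using tendsto_id.atBot_mul_atBot₀ tendsto_id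
  have hexp := ((tendsto_exp_neg_atTop_nhds_zero.comp hsq).mul_const |r|).const_mul (1 / (2 * π))
  rw [zero_mul, mul_zero] at hexp
  exact squeeze_zero_norm (fun x => abs_owenT_sqrt_two_mul_le x r) hexp

theorem hasDerivAt_erf_add_owenT_add_Yfun (r c x : ℝ) :
    HasDerivAt (fun x => 1 / 8 + 1 / 8 * erf x + owenT (√2 * x) r + c + 1 / 8 * Yfun x r)
      (1 / (4 * √π) * (exp (-x ^ 2) * erfc (r * x) ^ 2)) x := by
  have h := (((((hasDerivAt_erf x).const_mul (1 / 8)).const_add (1 / 8)).add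
    (hasDerivAt_owenT_sqrt_two_mul x r)).add_const c).add ((hasDerivAt_Yfun x r).const_mul (1 / 8))
  refine h.congr_deriv ?_
  have : √π ≠ 0 := by positivity
  rw [erfc]
  field_simp
  ring

theorem trivariate_cdf_identity_general (η r : ℝ) (Yinf : ℝ)
    (hY : Tendsto (fun η => Yfun η r) atTop (nhds Yinf)) :
    (1 / (4 * Real.sqrt Real.pi)) * ∫ t in Set.Iic η, Real.exp (-t ^ 2) * erfc (r * t) ^ 2
      = 1 / 8 + (1 / 8) * erf η + owenT (Real.sqrt 2 * η) r
        + (1 / 8) * Yinf + (1 / 8) * Yfun η r := by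
  have hlim : Tendsto (fun x => 1 / 8 + 1 / 8 * erf x + owenT (√2 * x) r + 1 / 8 * Yinf
      + 1 / 8 * Yfun x r) atBot (𝓝 0) := by
    have h := (((((tendsto_erf_atBot.const_mul (1 / 8)).const_add (1 / 8)).add
      (tendsto_owenT_sqrt_two_mul_atBot r)).add_const (1 / 8 * Yinf)).add
      ((hY.atBot_of_odd (Yfun_neg · r)).const_mul (1 / 8)))
    convert h using 2
    ring
  rw [← MeasureTheory.integral_const_mul, integral_Iic_of_hasDerivAt_of_tendsto'
    (fun x _ => hasDerivAt_erf_add_owenT_add_Yfun r _ x)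
    ((integrable_exp_neg_sq_mul_erfc_sq r).const_mul _).integrableOn hlim, sub_zero]

theorem trivariate_cdf_identity (η r : ℝ) (hr : 0 ≤ r) (Yinf : ℝ)
    (hY : Tendsto (fun η => Yfun η r) atTop (nhds Yinf)) :
    (1 / (4 * Real.sqrt Real.pi)) * ∫ t in Set.Iic η, Real.exp (-t ^ 2) * erfc (r * t) ^ 2
      = 1 / 8 + (1 / 8) * erf η + owenT (Real.sqrt 2 * η) r
        + (1 / 8) * Yinf + (1 / 8) * Yfun η r :=
  trivariate_cdf_identity_general η r Yinf hY
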